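/- arXiv:2601.18304 — 2 statements merged into one kernel-verified Lean document; each statement's English description precedes it below -/
import Mathlib

section
/- Let G be a topological group with a Borel probability measure μ, and let h be a bounded μ-harmonic function on G. Set μ̃ = Σ_{n≥0} 2^{-(n+1)} μ^{*n}. Then for every g ∈ G, μ̃({ z ∈ Z(G) : h(zg) ≠ h(g) }) = 0, where Z(G) is the center of G. -/
open MeasureTheory Filter ProbabilityTheory
open scoped ENNReal NNReal

noncomputable def mconv {G : Type*} [Mul G] [MeasurableSpace G] (μ ν : Measure G) : Measure G :=
  (μ.prod ν).map (fun p => p.1 * p.2)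

noncomputable def mconvPow {G : Type*} [Monoid G] [MeasurableSpace G] (μ : Measure G) : ℕ → Measure G
  | 0 => Measure.dirac 1
  | n+1 => mconv (mconvPow μ n) μ

noncomputable def tvDist {α : Type*} [MeasurableSpace α] (μ ν : Measure α) : ℝ :=
  ⨆ A : Set α, |(μ A).toReal - (ν A).toReal|

noncomputable def tildeMeasure {G : Type*} [Monoid G] [MeasurableSpace G] (μ : Measure G) : Measure G :=
  Measure.sum (fun n => ((2:ℝ≥0∞)^(n+1))⁻¹ • mconvPow μ n)

/-!
The energies `a m = ∫ ‖h‖² dμ^{*m}` of a bounded harmonic `h` are bounded, and by the variance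
identity for the martingale `z ↦ h (x z)` their increments are
`a (m + n) - a m = ∫∫ ‖h (x z) - h x‖² dμ^{*m}(x) dμ^{*n}(z) ≥ 0`; hence the increments tend to `0`
as `m → ∞`. For central `z`, harmonicity gives `h z - h 1 = ∫ (h (x z) - h x) dμ^{*m}(x)`, so by
Jensen `‖h z - h 1‖²` lies below the inner integral for every `m`. Its infimum over `m` has
`μ^{*n}`-integral `0`, so `h z = h 1` for `μ^{*n}`-almost every central `z`. Translating `h` by `g`
gives the statement at `g`.
-/

open scoped Topology

section Variance

variable {α E : Type*} [MeasurableSpace α] {ν : Measure α} [IsProbabilityMeasure ν]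
  [NormedAddCommGroup E] [InnerProductSpace ℝ E] [CompleteSpace E] {f : α → E}

theorem integral_norm_sub_integral_sq (hf : MemLp f 2 ν) :
    ∫ x, ‖f x - ∫ y, f y ∂ν‖ ^ 2 ∂ν = ∫ x, ‖f x‖ ^ 2 ∂ν - ‖∫ x, f x ∂ν‖ ^ 2 := by
  set b := ∫ y, f y ∂ν
  have hf1 : Integrable f ν := hf.integrable one_le_two
  have hf2 : Integrable (fun x => ‖f x‖ ^ 2) ν := hf.integrable_norm_pow' (p := 2)
  have hinner : Integrable (fun x => 2 * inner ℝ b (f x)) ν := (hf1.const_inner b).const_mul 2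
  simp_rw [norm_sub_sq_real, real_inner_comm b]
  have hsub : Integrable (fun x => ‖f x‖ ^ 2 - 2 * inner ℝ b (f x)) ν := hf2.sub hinner
  rw [integral_add hsub (integrable_const _), integral_sub hf2 hinner,
    integral_const_mul, integral_inner hf1, integral_const, real_inner_self_eq_norm_sq]
  simp only [probReal_univ, one_smul]
  ring

theorem norm_integral_sq_le_integral_norm_sq (hf : MemLp f 2 ν) :
    ‖∫ x, f x ∂ν‖ ^ 2 ≤ ∫ x, ‖f x‖ ^ 2 ∂ν := by
  have hvar := integral_norm_sub_integral_sq hf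
  have hnonneg : 0 ≤ ∫ x, ‖f x - ∫ y, f y ∂ν‖ ^ 2 ∂ν := integral_nonneg fun _ => sq_nonneg _
  linarith

end Variance

theorem ae_iInf_eq_zero_of_tendsto_integral {α : Type*} [MeasurableSpace α] {ν : Measure α}
    {Q : ℕ → α → ℝ} (hQ : ∀ m, Integrable (Q m) ν) (hQ0 : ∀ m, 0 ≤ Q m)
    (hlim : Tendsto (fun m => ∫ x, Q m x ∂ν) atTop (𝓝 0)) :
    ∀ᵐ x ∂ν, ⨅ m, Q m x = 0 := by
  have hbdd : ∀ x, BddBelow (Set.range fun m => Q m x) :=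
    fun x => ⟨0, Set.forall_mem_range.2 fun m => hQ0 m x⟩
  have hF0 : 0 ≤ fun x => ⨅ m, Q m x := fun x => le_ciInf fun m => hQ0 m x
  have hFint : Integrable (fun x => ⨅ m, Q m x) ν :=
    (hQ 0).mono' (AEMeasurable.iInf fun m => (hQ m).aemeasurable).aestronglyMeasurable
      (ae_of_all _ fun x => by
        rw [Real.norm_of_nonneg (hF0 x)]
        exact ciInf_le (hbdd x) 0)
  refine (integral_eq_zero_iff_of_nonneg hF0 hFint).mp (le_antisymm ?_ (integral_nonneg hF0))
  exact ge_of_tendsto' hlim fun m => integral_mono hFint (hQ m) fun x => ciInf_le (hbdd x) m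

section ConvolutionPowers

variable {G : Type*} [Monoid G] [MeasurableSpace G] (μ : Measure G)

theorem mconvPow_zero : mconvPow μ 0 = Measure.dirac 1 := rfl

theorem mconvPow_succ (n : ℕ) : mconvPow μ (n + 1) = mconvPow μ n ∗ₘ μ := rfl

variable [MeasurableMul₂ G]

instance [SFinite μ] (n : ℕ) : SFinite (mconvPow μ n) := by
  induction n with
  | zero => rw [mconvPow_zero]; infer_instance
  | succ n ih => rw [mconvPow_succ]; unfold Measure.mconv; infer_instance

instance [IsProbabilityMeasure μ] (n : ℕ) : IsProbabilityMeasure (mconvPow μ n) := by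
  induction n with
  | zero => rw [mconvPow_zero]; infer_instance
  | succ n ih => rw [mconvPow_succ]; infer_instance

theorem mconvPow_add [SFinite μ] (m n : ℕ) :
    mconvPow μ (m + n) = mconvPow μ m ∗ₘ mconvPow μ n := by
  induction n with
  | zero => rw [mconvPow_zero, Measure.mconv_dirac_one]; rfl
  | succ n ih => rw [← add_assoc, mconvPow_succ, ih, mconvPow_succ, Measure.mconv_assoc]

end ConvolutionPowers

theorem memLp_comp_of_norm_le {X Y E : Type*} [MeasurableSpace X] [MeasurableSpace Y]
    [NormedAddCommGroup E] {ν : Measure X} [IsFiniteMeasure ν] {h : Y → E} {C : ℝ}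
    (hm : StronglyMeasurable h) (hC : ∀ y, ‖h y‖ ≤ C) {φ : X → Y} (hφ : Measurable φ)
    (p : ℝ≥0∞) : MemLp (fun x => h (φ x)) p ν :=
  .of_bound (hm.comp_measurable hφ).aestronglyMeasurable C (ae_of_all _ fun _ => hC _)

def IsHarmonic {G E : Type*} [Mul G] [MeasurableSpace G] [NormedAddCommGroup E]
    [NormedSpace ℝ E] (μ : Measure G) (h : G → E) : Prop :=
  ∀ g, h g = ∫ γ, h (g * γ) ∂μ

theorem IsHarmonic.comp_mul_left {G E : Type*} [Semigroup G] [MeasurableSpace G]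
    [NormedAddCommGroup E] [NormedSpace ℝ E] {μ : Measure G} {h : G → E}
    (hh : IsHarmonic μ h) (g : G) : IsHarmonic μ fun x => h (g * x) := fun x => by
  simpa only [mul_assoc] using hh (g * x)

section Harmonic

variable {G E : Type*} [Monoid G] [MeasurableSpace G] [MeasurableMul₂ G]
  [NormedAddCommGroup E] [InnerProductSpace ℝ E] [CompleteSpace E]
  {μ : Measure G} [IsProbabilityMeasure μ] {h : G → E} {C : ℝ}

variable (hh : IsHarmonic μ h) (hm : StronglyMeasurable h) (hC : ∀ x, ‖h x‖ ≤ C)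
include hh hm hC

theorem IsHarmonic.eq_integral_mconvPow (n : ℕ) (g : G) :
    h g = ∫ z, h (g * z) ∂(mconvPow μ n) := by
  induction n generalizing g with
  | zero =>
    rw [mconvPow_zero, integral_dirac' (fun z => h (g * z)) _
      (hm.comp_measurable (measurable_const_mul g)), mul_one]
  | succ n ih =>
    rw [mconvPow_succ, integral_mconv ((memLp_comp_of_norm_le hm hC
      (measurable_const_mul g) 1).integrable le_rfl), ih g]
    exact integral_congr_ae (ae_of_all _ fun x => by simpa only [mul_assoc] using hh (g * x))

theorem IsHarmonic.integral_norm_sub_sq (n : ℕ) (x : G) :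
    ∫ z, ‖h (x * z) - h x‖ ^ 2 ∂(mconvPow μ n) =
      ∫ z, ‖h (x * z)‖ ^ 2 ∂(mconvPow μ n) - ‖h x‖ ^ 2 := by
  rw [hh.eq_integral_mconvPow hm hC n x]
  exact integral_norm_sub_integral_sq (memLp_comp_of_norm_le hm hC (measurable_const_mul x) 2)

theorem IsHarmonic.integral_integral_norm_sub_sq (m n : ℕ) :
    ∫ x, ∫ z, ‖h (x * z) - h x‖ ^ 2 ∂(mconvPow μ n) ∂(mconvPow μ m) =
      ∫ x, ‖h x‖ ^ 2 ∂(mconvPow μ (m + n)) - ∫ x, ‖h x‖ ^ 2 ∂(mconvPow μ m) := by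
  have hsq : ∀ {X : Type _} [MeasurableSpace X] {ν : Measure X} [IsFiniteMeasure ν] {φ : X → G},
      Measurable φ → Integrable (fun x => ‖h (φ x)‖ ^ 2) ν := fun hφ =>
    (memLp_comp_of_norm_le hm hC hφ 2).integrable_norm_pow'
  rw [mconvPow_add, integral_mconv (hsq measurable_id'), ← integral_sub
    (hsq (measurable_mul (M := G))).integral_prod_left (hsq measurable_id')]
  exact integral_congr_ae (ae_of_all _ fun x => hh.integral_norm_sub_sq hm hC n x)

theorem IsHarmonic.tendsto_integral_norm_sq_add_sub (n : ℕ) :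
    Tendsto (fun m => ∫ x, ‖h x‖ ^ 2 ∂(mconvPow μ (m + n)) - ∫ x, ‖h x‖ ^ 2 ∂(mconvPow μ m))
      atTop (𝓝 0) := by
  set a : ℕ → ℝ := fun m => ∫ x, ‖h x‖ ^ 2 ∂(mconvPow μ m)
  have hmono : Monotone a := monotone_nat_of_le_succ fun m => by
    rw [← sub_nonneg, ← hh.integral_integral_norm_sub_sq hm hC m 1]
    exact integral_nonneg fun x => integral_nonneg fun z => sq_nonneg _
  have hbdd : BddAbove (Set.range a) := by
    refine ⟨C ^ 2, Set.forall_mem_range.2 fun m => ?_⟩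
    refine (integral_mono (memLp_comp_of_norm_le hm hC measurable_id' 2).integrable_norm_pow'
      (integrable_const (C ^ 2)) fun x => pow_le_pow_left₀ (norm_nonneg _) (hC x) 2).trans_eq ?_
    simp
  have hlim := tendsto_atTop_ciSup hmono hbdd
  simpa using (hlim.comp (tendsto_add_atTop_nat n)).sub hlim

theorem IsHarmonic.norm_sub_sq_le_integral_of_commute {z : G} (hz : ∀ g, g * z = z * g) (m : ℕ) :
    ‖h z - h 1‖ ^ 2 ≤ ∫ x, ‖h (x * z) - h x‖ ^ 2 ∂(mconvPow μ m) := by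
  have hL : ∀ {φ : G → G}, Measurable φ → MemLp (fun x => h (φ x)) 2 (mconvPow μ m) :=
    fun hφ => memLp_comp_of_norm_le hm hC hφ 2
  have hdiff : h z - h 1 = ∫ x, (h (x * z) - h x) ∂(mconvPow μ m) := by
    rw [integral_sub ((hL (measurable_mul_const z)).integrable one_le_two)
      ((hL measurable_id').integrable one_le_two), hh.eq_integral_mconvPow hm hC m z,
      hh.eq_integral_mconvPow hm hC m 1]
    simp only [hz, one_mul]
  rw [hdiff]
  exact norm_integral_sq_le_integral_norm_sq
    ((hL (measurable_mul_const z)).sub (hL measurable_id'))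

theorem IsHarmonic.mconvPow_setOf_commute_ne_eq_zero (n : ℕ) :
    mconvPow μ n {z | (∀ g, g * z = z * g) ∧ h z ≠ h 1} = 0 := by
  have hD : ∀ m, Integrable (Function.uncurry fun x z => ‖h (x * z) - h x‖ ^ 2)
      ((mconvPow μ m).prod (mconvPow μ n)) := fun m =>
    ((memLp_comp_of_norm_le hm hC measurable_mul 2).sub
      (memLp_comp_of_norm_le hm hC measurable_fst 2)).integrable_norm_pow'
  have hQ : ∀ m, ∫ z, ∫ x, ‖h (x * z) - h x‖ ^ 2 ∂(mconvPow μ m) ∂(mconvPow μ n) =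
      ∫ x, ‖h x‖ ^ 2 ∂(mconvPow μ (m + n)) - ∫ x, ‖h x‖ ^ 2 ∂(mconvPow μ m) := fun m => by
    rw [← integral_integral_swap (hD m), hh.integral_integral_norm_sub_sq hm hC]
  have hae := ae_iInf_eq_zero_of_tendsto_integral
    (Q := fun m z => ∫ x, ‖h (x * z) - h x‖ ^ 2 ∂(mconvPow μ m))
    (fun m => (hD m).integral_prod_right) (fun m z => integral_nonneg fun x => sq_nonneg _)
    ((hh.tendsto_integral_norm_sq_add_sub hm hC n).congr fun m => (hQ m).symm)
  refine measure_mono_null (fun z ⟨hz, hne⟩ => ?_) (ae_iff.mp hae)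
  exact ((pow_pos (norm_pos_iff.2 (sub_ne_zero.2 hne)) 2).trans_le
    (le_ciInf fun m => hh.norm_sub_sq_le_integral_of_commute hm hC hz m)).ne'

end Harmonic

theorem stmt9_general {G : Type*} [Group G]
    [MeasurableSpace G] [MeasurableMul₂ G]
    (μ : Measure G) [IsProbabilityMeasure μ]
    (h : G → ℂ) (hmeas : Measurable h) (hbdd : ∃ C, ∀ g, ‖h g‖ ≤ C)
    (hharm : ∀ g, h g = ∫ γ, h (g * γ) ∂μ) :
    ∀ g : G, tildeMeasure μ {z : G | z ∈ Subgroup.center G ∧ h (z * g) ≠ h g} = 0 := by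
  intro g
  obtain ⟨C, hC⟩ := hbdd
  have hnull : ∀ n, mconvPow μ n {z | z ∈ Subgroup.center G ∧ h (z * g) ≠ h g} = 0 := by
    intro n
    refine measure_mono_null ?_
      ((IsHarmonic.comp_mul_left hharm g).mconvPow_setOf_commute_ne_eq_zero
        (hmeas.stronglyMeasurable.comp_measurable (measurable_const_mul g)) (fun _ => hC _) n)
    rintro z ⟨hz, hne⟩
    refine ⟨Subgroup.mem_center_iff.1 hz, ?_⟩
    rwa [mul_one, Subgroup.mem_center_iff.1 hz g]
  -- `sum_apply_of_countable` holds for arbitrary sets; the centre need not be measurable.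
  rw [tildeMeasure, Measure.sum_apply_of_countable]
  simp [hnull]

/-- a bounded harmonic function is `μ̃`-a.e. invariant under central elements. -/
theorem stmt9 {G : Type*} [Group G] [TopologicalSpace G] [IsTopologicalGroup G]
    [MeasurableSpace G] [BorelSpace G] [MeasurableMul₂ G]
    (μ : Measure G) [IsProbabilityMeasure μ]
    (h : G → ℂ) (hmeas : Measurable h) (hbdd : ∃ C, ∀ g, ‖h g‖ ≤ C)
    (hharm : ∀ g, h g = ∫ γ, h (g * γ) ∂μ) :
    ∀ g : G, tildeMeasure μ {z : G | z ∈ Subgroup.center G ∧ h (z * g) ≠ h g} = 0 :=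
  stmt9_general μ h hmeas hbdd hharm
end

section
/- Let G be a group with probability measures μ, θ and suppose there exists h ∈ H^∞(G,μ) and g ∈ G with (θ*h)(g) ≠ h(g), where (θ*h)(x) = ∫ h(xy) dθ(y). Then lim inf_{n→∞} (1/n)‖Σ_{i=1}^n (θ*μ^{*i} − μ^{*i})‖_TV > 0. -/
open MeasureTheory Filter ProbabilityTheory
open scoped ENNReal NNReal

/-!
Harmonicity gives `∫ h(x y) dμ^{*i}(y) = h(x)` for every `i`, hence
`∫ h(g y) d(θ * μ^{*i})(y) = (θ * h)(g)`. Summing over `i ≤ n`, the two Cesàro sums integrate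
`y ↦ h(g y)` to `n (θ * h)(g)` and `n h(g)`, while integrals of a function bounded by `C` against
two finite measures differ by at most `2 C` times their total-variation distance (Hahn
decomposition). So `n ‖(θ * h)(g) - h(g)‖ ≤ 2 C ‖Σ (θ * μ^{*i} - μ^{*i})‖_TV`, and the Cesàro
averages stay above `‖(θ * h)(g) - h(g)‖ / 2C`.
-/

section TotalVariation

variable {α E : Type*} [MeasurableSpace α] [NormedAddCommGroup E] [NormedSpace ℝ E]

lemma abs_sub_measure_le_add (μ ν : Measure α) [IsFiniteMeasure μ] [IsFiniteMeasure ν]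
    (A : Set α) : |(μ A).toReal - (ν A).toReal| ≤ (μ Set.univ).toReal + (ν Set.univ).toReal := by
  have hμ : (μ A).toReal ≤ (μ Set.univ).toReal := measureReal_mono (Set.subset_univ A)
  have hν : (ν A).toReal ≤ (ν Set.univ).toReal := measureReal_mono (Set.subset_univ A)
  rw [abs_le]
  constructor <;> linarith [(μ A).toReal_nonneg, (ν A).toReal_nonneg]

lemma abs_sub_le_tvDist (μ ν : Measure α) [IsFiniteMeasure μ] [IsFiniteMeasure ν] (A : Set α) :
    |(μ A).toReal - (ν A).toReal| ≤ tvDist μ ν :=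
  le_ciSup ⟨_, Set.forall_mem_range.2 (abs_sub_measure_le_add μ ν)⟩ A

lemma tvDist_le_add (μ ν : Measure α) [IsFiniteMeasure μ] [IsFiniteMeasure ν] :
    tvDist μ ν ≤ (μ Set.univ).toReal + (ν Set.univ).toReal :=
  ciSup_le (abs_sub_measure_le_add μ ν)

lemma tvDist_finsetSum_le {ι : Type*} (s : Finset ι) (μ ν : ι → Measure α)
    [∀ i, IsProbabilityMeasure (μ i)] [∀ i, IsProbabilityMeasure (ν i)] :
    tvDist (∑ i ∈ s, μ i) (∑ i ∈ s, ν i) ≤ 2 * s.card := by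
  refine (tvDist_le_add _ _).trans_eq ?_
  simp [Measure.finsetSum_apply, two_mul]

lemma norm_integral_sub_le_of_le {μ ν : Measure α} [IsFiniteMeasure μ] (hνμ : ν ≤ μ)
    {f : α → E} (hf : StronglyMeasurable f) {C : ℝ} (hC : ∀ x, ‖f x‖ ≤ C) :
    ‖(∫ x, f x ∂μ) - ∫ x, f x ∂ν‖ ≤ C * ((μ Set.univ).toReal - (ν Set.univ).toReal) := by
  have : IsFiniteMeasure ν := isFiniteMeasure_of_le μ hνμ
  have hint : ∀ κ : Measure α, [IsFiniteMeasure κ] → Integrable f κ := fun κ _ =>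
    .of_bound hf.aestronglyMeasurable C (ae_of_all _ hC)
  calc ‖(∫ x, f x ∂μ) - ∫ x, f x ∂ν‖ = ‖∫ x, f x ∂(μ - ν)‖ := by
        conv_lhs => rw [← Measure.sub_add_cancel_of_le hνμ,
          integral_add_measure (hint _) (hint _), add_sub_cancel_right]
    _ ≤ C * ((μ - ν) Set.univ).toReal := norm_integral_le_of_norm_le_const (ae_of_all _ hC)
    _ = C * ((μ Set.univ).toReal - (ν Set.univ).toReal) := by
        rw [Measure.sub_apply .univ hνμ, ENNReal.toReal_sub_of_le (hνμ _) (measure_ne_top _ _)]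

lemma norm_integral_sub_le_two_mul_tvDist (μ ν : Measure α) [IsFiniteMeasure μ]
    [IsFiniteMeasure ν] {f : α → E} (hf : StronglyMeasurable f) {C : ℝ} (hC0 : 0 ≤ C)
    (hC : ∀ x, ‖f x‖ ≤ C) :
    ‖(∫ x, f x ∂μ) - ∫ x, f x ∂ν‖ ≤ 2 * C * tvDist μ ν := by
  obtain ⟨s, hs, hνμ, hμν⟩ := hahn_decomposition μ ν
  have hle : ν.restrict s ≤ μ.restrict s := Measure.le_iff.2 fun t ht => by
    simpa only [Measure.restrict_apply ht] using hνμ _ (ht.inter hs) Set.inter_subset_right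
  have hle' : μ.restrict sᶜ ≤ ν.restrict sᶜ := Measure.le_iff.2 fun t ht => by
    simpa only [Measure.restrict_apply ht] using hμν _ (ht.inter hs.compl) Set.inter_subset_right
  have hint : ∀ κ : Measure α, [IsFiniteMeasure κ] → Integrable f κ := fun κ _ =>
    .of_bound hf.aestronglyMeasurable C (ae_of_all _ hC)
  have hs_bound := norm_integral_sub_le_of_le hle hf hC
  have hsc_bound := norm_integral_sub_le_of_le hle' hf hC
  simp only [Measure.restrict_apply_univ] at hs_bound hsc_bound
  have htv : (μ s).toReal - (ν s).toReal ≤ tvDist μ ν :=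
    (le_abs_self _).trans (abs_sub_le_tvDist μ ν s)
  have htv' : (ν sᶜ).toReal - (μ sᶜ).toReal ≤ tvDist μ ν :=
    (le_abs_self _).trans (abs_sub_comm (μ sᶜ).toReal _ ▸ abs_sub_le_tvDist μ ν sᶜ)
  calc ‖(∫ x, f x ∂μ) - ∫ x, f x ∂ν‖
      = ‖((∫ x in s, f x ∂μ) - ∫ x in s, f x ∂ν) - ((∫ x in sᶜ, f x ∂ν) - ∫ x in sᶜ, f x ∂μ)‖ := by
        rw [← integral_add_compl hs (hint μ), ← integral_add_compl hs (hint ν)]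
        congr 1
        abel
    _ ≤ C * tvDist μ ν + C * tvDist μ ν := (norm_sub_le _ _).trans <| add_le_add
        (hs_bound.trans (mul_le_mul_of_nonneg_left htv hC0))
        (hsc_bound.trans (mul_le_mul_of_nonneg_left htv' hC0))
    _ = 2 * C * tvDist μ ν := by ring

end TotalVariation

section Convolution

variable {G : Type*} [Monoid G] [MeasurableSpace G] [MeasurableMul₂ G]

instance isProbabilityMeasure_mconv (μ ν : Measure G) [IsProbabilityMeasure μ]
    [IsProbabilityMeasure ν] : IsProbabilityMeasure (mconv μ ν) :=
  Measure.isProbabilityMeasure_map measurable_mul.aemeasurable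

instance isProbabilityMeasure_mconvPow (μ : Measure G) [IsProbabilityMeasure μ] (n : ℕ) :
    IsProbabilityMeasure (mconvPow μ n) := by
  induction n with
  | zero => exact Measure.dirac.isProbabilityMeasure
  | succ n ih => exact isProbabilityMeasure_mconv _ _

lemma integral_mconv (μ ν : Measure G) [IsProbabilityMeasure μ] [IsProbabilityMeasure ν]
    {f : G → ℂ} (hf : Measurable f) {C : ℝ} (hC : ∀ x, ‖f x‖ ≤ C) :
    ∫ x, f x ∂(mconv μ ν) = ∫ a, ∫ b, f (a * b) ∂ν ∂μ := by
  rw [mconv, integral_map measurable_mul.aemeasurable hf.aestronglyMeasurable]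
  exact integral_prod _ <| .of_bound (hf.comp measurable_mul).aestronglyMeasurable C
    (ae_of_all _ fun _ => hC _)

lemma integral_mul_mconvPow_of_harmonic {μ : Measure G} [IsProbabilityMeasure μ] {h : G → ℂ}
    (hmeas : Measurable h) {C : ℝ} (hC : ∀ x, ‖h x‖ ≤ C)
    (hharm : ∀ x, h x = ∫ γ, h (x * γ) ∂μ) (n : ℕ) (x : G) :
    ∫ y, h (x * y) ∂(mconvPow μ n) = h x := by
  induction n generalizing x with
  | zero =>
    rw [mconvPow, integral_dirac' (fun y => h (x * y)) 1 (by fun_prop), mul_one]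
  | succ n ih =>
    rw [mconvPow, integral_mconv (f := fun y => h (x * y)) _ _ (by fun_prop) fun _ => hC _]
    simp_rw [← mul_assoc, ← hharm]
    exact ih x

lemma integral_mul_mconv_mconvPow_of_harmonic {μ : Measure G} [IsProbabilityMeasure μ]
    (θ : Measure G) [IsProbabilityMeasure θ] {h : G → ℂ} (hmeas : Measurable h) {C : ℝ}
    (hC : ∀ x, ‖h x‖ ≤ C) (hharm : ∀ x, h x = ∫ γ, h (x * γ) ∂μ) (n : ℕ) (x : G) :
    ∫ y, h (x * y) ∂(mconv θ (mconvPow μ n)) = ∫ y, h (x * y) ∂θ := by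
  rw [integral_mconv (f := fun y => h (x * y)) _ _ (by fun_prop) fun _ => hC _]
  simp_rw [← mul_assoc, integral_mul_mconvPow_of_harmonic hmeas hC hharm]

end Convolution

lemma card_mul_norm_sub_le_tvDist_of_harmonic {G : Type*} [Monoid G] [MeasurableSpace G]
    [MeasurableMul₂ G] {μ : Measure G} [IsProbabilityMeasure μ] (θ : Measure G)
    [IsProbabilityMeasure θ] {h : G → ℂ} (hmeas : Measurable h) {C : ℝ} (hC0 : 0 ≤ C)
    (hC : ∀ x, ‖h x‖ ≤ C) (hharm : ∀ x, h x = ∫ γ, h (x * γ) ∂μ) (s : Finset ℕ) (g : G) :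
    s.card * ‖(∫ y, h (g * y) ∂θ) - h g‖ ≤
      2 * C * tvDist (∑ i ∈ s, mconv θ (mconvPow μ i)) (∑ i ∈ s, mconvPow μ i) := by
  have hint : ∀ κ : Measure G, [IsProbabilityMeasure κ] → Integrable (fun y => h (g * y)) κ :=
    fun κ _ => .of_bound (hmeas.comp (measurable_const_mul g)).aestronglyMeasurable C
      (ae_of_all _ fun _ => hC _)
  have key := norm_integral_sub_le_two_mul_tvDist (∑ i ∈ s, mconv θ (mconvPow μ i))
    (∑ i ∈ s, mconvPow μ i) (f := fun y => h (g * y)) (by fun_prop) hC0 fun _ => hC _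
  rwa [integral_finsetSum_measure fun _ _ => hint _, integral_finsetSum_measure fun _ _ => hint _,
    Finset.sum_congr rfl fun i _ =>
      integral_mul_mconv_mconvPow_of_harmonic θ hmeas hC hharm i g,
    Finset.sum_congr rfl fun i _ => integral_mul_mconvPow_of_harmonic hmeas hC hharm i g,
    Finset.sum_const, Finset.sum_const, ← smul_sub, nsmul_eq_mul, norm_mul,
    Complex.norm_natCast] at key

/-- if some bounded μ-harmonic function is not θ-invariant at some point, then
the Cesàro total-variation averages stay bounded away from 0. -/
theorem stmt18 {G : Type*} [Group G] [MeasurableSpace G] [MeasurableMul₂ G]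
    (μ θ : Measure G) [IsProbabilityMeasure μ] [IsProbabilityMeasure θ]
    (h : G → ℂ) (hmeas : Measurable h) (hbdd : ∃ C, ∀ x, ‖h x‖ ≤ C)
    (hharm : ∀ x, h x = ∫ γ, h (x * γ) ∂μ)
    (g : G) (hne : (∫ y, h (g * y) ∂θ) ≠ h g) :
    0 < liminf (fun n : ℕ => (1 / (n : ℝ)) *
      tvDist (∑ i ∈ Finset.Icc 1 n, mconv θ (mconvPow μ i))
        (∑ i ∈ Finset.Icc 1 n, mconvPow μ i)) atTop := by
  obtain ⟨C, hC⟩ := hbdd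
  have hC' : ∀ x, ‖h x‖ ≤ max C 1 := fun x => (hC x).trans (le_max_left _ _)
  have hδ : 0 < ‖(∫ y, h (g * y) ∂θ) - h g‖ := norm_pos_iff.2 (sub_ne_zero.2 hne)
  have hC'pos : 0 < 2 * max C 1 := by positivity
  refine (div_pos hδ hC'pos).trans_le (le_liminf_of_le ?_ ?_)
  -- `liminf` in `ℝ` is junk unless the sequence is bounded above; here it is bounded by `2`.
  · refine (isBoundedUnder_of ⟨2, fun n => ?_⟩).isCoboundedUnder_ge
    have htv := tvDist_finsetSum_le (Finset.Icc 1 n) (fun i => mconv θ (mconvPow μ i))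
      (fun i => mconvPow μ i)
    rcases eq_or_ne n 0 with rfl | hn
    · simp
    rw [Nat.card_Icc, add_tsub_cancel_right] at htv
    rw [one_div_mul_eq_div, div_le_iff₀ (by positivity)]
    linarith
  · filter_upwards [eventually_ge_atTop 1] with n hn
    have key := card_mul_norm_sub_le_tvDist_of_harmonic θ hmeas (by positivity) hC' hharm
      (Finset.Icc 1 n) g
    rw [Nat.card_Icc, add_tsub_cancel_right] at key
    rw [one_div_mul_eq_div, div_le_div_iff₀ hC'pos (by positivity)]
    linarith
end
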